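/- The scoring function S(x,y) = y(φ(y) − φ(x)) − y(y−x)φ'(x), with φ convex with subgradient φ', is consistent for the functional T(F) = E_F[Y²]/E_F[Y] on the positive half-axis; in particular both the squared relative error S(x,y) = (x−y)²/x² (via φ(y)=1/y) and S(x,y) = y(x−y)² (via φ(y)=y²) have T(F) = E_F[Y²]/E_F[Y] as optimal point forecast. -/

import Mathlib

open MeasureTheory Set

/-!
Writing `m₁ = E[Y]` and `m₂ = E[Y²]`, the expected score is affine in the moments:
`E[S(x,Y)] = E[Yφ(Y)] − φ(x) m₁ − φ'(x) (m₂ − x m₁)`. At `t = m₂/m₁` the last term vanishes, so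
`E[S(x,Y)] − E[S(t,Y)] = m₁ (φ(t) − φ(x) − φ'(x) (t − x))`, which is nonnegative by the
subgradient inequality. The two special scores are the cases `φ(y) = 1/y` and `φ(y) = y²`.
-/

def ratioScore (φ φ' : ℝ → ℝ) (x y : ℝ) : ℝ :=
  y * (φ y - φ x) - y * (y - x) * φ' x

lemma ratioScore_inv {x y : ℝ} (hx : 0 < x) (hy : 0 < y) :
    ratioScore (·⁻¹) (fun z => -(z ^ 2)⁻¹) x y = (x - y) ^ 2 / x ^ 2 := by
  unfold ratioScore
  field_simp
  ring

lemma ratioScore_sq (x y : ℝ) :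
    ratioScore (· ^ 2) (2 * ·) x y = y * (x - y) ^ 2 := by
  unfold ratioScore
  ring

lemma inv_add_neg_inv_sq_mul_sub_le {a b : ℝ} (ha : 0 < a) (hb : 0 < b) :
    a⁻¹ + -(a ^ 2)⁻¹ * (b - a) ≤ b⁻¹ := by
  have h : b⁻¹ - (a⁻¹ + -(a ^ 2)⁻¹ * (b - a)) = (a - b) ^ 2 / (a ^ 2 * b) := by
    field_simp
    ring
  have : 0 ≤ (a - b) ^ 2 / (a ^ 2 * b) := by positivity
  linarith

section MomentRatio

variable {μ : Measure ℝ} {t : ℝ}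
  (hY : Integrable (fun y => y) μ) (hY2 : Integrable (fun y => y ^ 2) μ)

include hY hY2

lemma integral_ratioScore {φ : ℝ → ℝ} (φ' : ℝ → ℝ) (hYφ : Integrable (fun y => y * φ y) μ)
    (x : ℝ) :
    ∫ y, ratioScore φ φ' x y ∂μ =
      (∫ y, y * φ y ∂μ) - φ x * (∫ y, y ∂μ) - φ' x * ((∫ y, y ^ 2 ∂μ) - x * ∫ y, y ∂μ) := by
  have hcorr : Integrable (fun y => φ' x * (y ^ 2 - x * y)) μ :=
    (hY2.sub (hY.const_mul x)).const_mul _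
  have hlin : Integrable (fun y => φ x * y + φ' x * (y ^ 2 - x * y)) μ :=
    (hY.const_mul _).add hcorr
  calc ∫ y, ratioScore φ φ' x y ∂μ
      = ∫ y, (y * φ y - (φ x * y + φ' x * (y ^ 2 - x * y))) ∂μ := by
        congr 1 with y
        unfold ratioScore
        ring
    _ = _ := by
        rw [integral_sub hYφ hlin, integral_add (hY.const_mul _) hcorr,
          integral_const_mul, integral_const_mul, integral_sub hY2 (hY.const_mul x),
          integral_const_mul]
        ring

variable (hM1 : 0 ≤ ∫ y, y ∂μ) (hM2 : ∫ y, y ^ 2 ∂μ = t * ∫ y, y ∂μ)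

include hM1 hM2

lemma integral_ratioScore_le {φ φ' : ℝ → ℝ} (hYφ : Integrable (fun y => y * φ y) μ) {x : ℝ}
    (hsub : φ x + φ' x * (t - x) ≤ φ t) :
    ∫ y, ratioScore φ φ' t y ∂μ ≤ ∫ y, ratioScore φ φ' x y ∂μ := by
  rw [integral_ratioScore hY hY2 φ' hYφ, integral_ratioScore hY hY2 φ' hYφ, hM2]
  nlinarith [mul_le_mul_of_nonneg_right hsub hM1]

lemma integral_sq_relative_error_le [IsFiniteMeasure μ] (hpos : ∀ᵐ y ∂μ, 0 < y) (ht : 0 < t)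
    {x : ℝ} (hx : 0 < x) :
    ∫ y, (t - y) ^ 2 / t ^ 2 ∂μ ≤ ∫ y, (x - y) ^ 2 / x ^ 2 ∂μ := by
  have hYφ : Integrable (fun y => y * y⁻¹) μ :=
    (integrable_const (1 : ℝ)).congr (hpos.mono fun y hy => (mul_inv_cancel₀ hy.ne').symm)
  have hscore : ∀ z, 0 < z →
      ∫ y, ratioScore (·⁻¹) (fun z => -(z ^ 2)⁻¹) z y ∂μ = ∫ y, (z - y) ^ 2 / z ^ 2 ∂μ :=
    fun z hz => integral_congr_ae (hpos.mono fun y hy => ratioScore_inv hz hy)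
  rw [← hscore t ht, ← hscore x hx]
  exact integral_ratioScore_le hY hY2 hM1 hM2 hYφ (inv_add_neg_inv_sq_mul_sub_le hx ht)

lemma integral_mul_sub_sq_le (x : ℝ) :
    ∫ y, y * (t - y) ^ 2 ∂μ ≤ ∫ y, y * (x - y) ^ 2 ∂μ := by
  simp only [← ratioScore_sq]
  by_cases hY3 : Integrable (fun y => y * y ^ 2) μ
  · exact integral_ratioScore_le hY hY2 hM1 hM2 hY3 (by nlinarith [sq_nonneg (x - t)])
  · -- Without a third moment neither score is integrable, so both integrals are `0` by convention.
    have hundef : ∀ z, ¬ Integrable (fun y => ratioScore (· ^ 2) (2 * ·) z y) μ := fun z hz =>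
      hY3 <| ((hz.add (hY2.const_mul (2 * z))).sub (hY.const_mul (z ^ 2))).congr
        (ae_of_all _ fun y => by simp only [ratioScore, Pi.add_apply, Pi.sub_apply]; ring)
    rw [integral_undef (hundef t), integral_undef (hundef x)]

end MomentRatio

theorem consistency_for_second_moment_ratio_general
    (φ φ' : ℝ → ℝ)
    (hsub : ∀ x ∈ Ioi (0:ℝ), ∀ y ∈ Ioi (0:ℝ), φ x + φ' x * (y - x) ≤ φ y)
    (F : Measure ℝ) [IsProbabilityMeasure F] (hFI : ∀ᵐ y ∂F, y ∈ Ioi (0:ℝ))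
    (hint1 : MemLp (fun y => y) 2 F)
    (hint2 : Integrable (fun y => y * φ y) F)
    (hTI : (∫ y, y ^ 2 ∂F) / (∫ y, y ∂F) ∈ Ioi (0:ℝ)) :
    (∀ x ∈ Ioi (0:ℝ),
      ∫ y, (y * (φ y - φ ((∫ y, y ^ 2 ∂F) / (∫ y, y ∂F))) -
            y * (y - (∫ y, y ^ 2 ∂F) / (∫ y, y ∂F)) *
              φ' ((∫ y, y ^ 2 ∂F) / (∫ y, y ∂F))) ∂F
        ≤ ∫ y, (y * (φ y - φ x) - y * (y - x) * φ' x) ∂F) ∧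
    (∀ x ∈ Ioi (0:ℝ),
      ∫ y, (((∫ y, y ^ 2 ∂F) / (∫ y, y ∂F)) - y) ^ 2 /
            ((∫ y, y ^ 2 ∂F) / (∫ y, y ∂F)) ^ 2 ∂F
        ≤ ∫ y, (x - y) ^ 2 / x ^ 2 ∂F) ∧
    (∀ x ∈ Ioi (0:ℝ),
      ∫ y, y * (((∫ y, y ^ 2 ∂F) / (∫ y, y ∂F)) - y) ^ 2 ∂F
        ≤ ∫ y, y * (x - y) ^ 2 ∂F) := by
  have hY : Integrable (fun y => y) F := hint1.integrable one_le_two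
  have hY2 : Integrable (fun y => y ^ 2) F := by simpa using hint1.integrable_sq
  have hM1 : 0 ≤ ∫ y, y ∂F := integral_nonneg_of_ae (hFI.mono fun y hy => le_of_lt hy)
  have hM2 : ∫ y, y ^ 2 ∂F = (∫ y, y ^ 2 ∂F) / (∫ y, y ∂F) * ∫ y, y ∂F :=
    (div_mul_cancel₀ _ fun h => (mem_Ioi.mp hTI).ne' (by rw [h, div_zero])).symm
  exact ⟨fun x hx => integral_ratioScore_le hY hY2 hM1 hM2 hint2 (hsub x hx _ hTI),
    fun x hx => integral_sq_relative_error_le hY hY2 hM1 hM2 hFI hTI hx,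
    fun x _ => integral_mul_sub_sq_le hY hY2 hM1 hM2 x⟩

/-- The scoring function `S(x,y) = y(φ(y) − φ(x)) − y(y−x)φ'(x)` is consistent
for the functional `T(F) = E_F[Y²]/E_F[Y]` on the positive half-axis; in
particular, both the squared relative error `(x−y)²/x²` (via `φ(y) = 1/y`) and
`y(x−y)²` (via `φ(y) = y²`) have `T(F)` as an optimal point forecast. -/
theorem consistency_for_second_moment_ratio
    (φ φ' : ℝ → ℝ) (hconv : ConvexOn ℝ (Ioi (0:ℝ)) φ)
    (hsub : ∀ x ∈ Ioi (0:ℝ), ∀ y ∈ Ioi (0:ℝ), φ x + φ' x * (y - x) ≤ φ y)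
    (F : Measure ℝ) [IsProbabilityMeasure F] (hFI : ∀ᵐ y ∂F, y ∈ Ioi (0:ℝ))
    (hint1 : MemLp (fun y => y) 2 F)
    (hint2 : Integrable (fun y => y * φ y) F)
    (hint3 : Integrable (fun y => y ^ 2 * φ' y) F)
    (hTI : (∫ y, y ^ 2 ∂F) / (∫ y, y ∂F) ∈ Ioi (0:ℝ)) :
    (∀ x ∈ Ioi (0:ℝ),
      ∫ y, (y * (φ y - φ ((∫ y, y ^ 2 ∂F) / (∫ y, y ∂F))) -
            y * (y - (∫ y, y ^ 2 ∂F) / (∫ y, y ∂F)) *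
              φ' ((∫ y, y ^ 2 ∂F) / (∫ y, y ∂F))) ∂F
        ≤ ∫ y, (y * (φ y - φ x) - y * (y - x) * φ' x) ∂F) ∧
    (∀ x ∈ Ioi (0:ℝ),
      ∫ y, (((∫ y, y ^ 2 ∂F) / (∫ y, y ∂F)) - y) ^ 2 /
            ((∫ y, y ^ 2 ∂F) / (∫ y, y ∂F)) ^ 2 ∂F
        ≤ ∫ y, (x - y) ^ 2 / x ^ 2 ∂F) ∧
    (∀ x ∈ Ioi (0:ℝ),
      ∫ y, y * (((∫ y, y ^ 2 ∂F) / (∫ y, y ∂F)) - y) ^ 2 ∂F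
        ≤ ∫ y, y * (x - y) ^ 2 ∂F) :=
  consistency_for_second_moment_ratio_general φ φ' hsub F hFI hint1 hint2 hTI
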